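/- arXiv:2410.09830 — 3 statements merged into one kernel-verified Lean document; each statement's English description precedes it below -/
import Mathlib

section
/- For every integer n ≥ 3, the multiset of eigenvalues of the adjacency matrix of the complement of the double star S̄_{n,n} (a graph on 2n vertices) consists of (−1+√(4n−3))/2, (−1−√(4n−3))/2, (2n−3+√(4n²−8n+5))/2, (2n−3−√(4n²−8n+5))/2, together with −1 with multiplicity 2n−4. Equivalently, the characteristic polynomial of the adjacency matrix of S̄_{n,n} equals (x² − (2n−3)x − (n−1))·(x² + x − (n−1))·(x+1)^{2n−4}. -/
open Polynomial

/-- Adjacency matrix of a simple graph over ℝ (using classical decidability). -/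
noncomputable def adjMat {V : Type*} [Fintype V] (G : SimpleGraph V) : Matrix V V ℝ :=
  letI := Classical.decRel G.Adj
  SimpleGraph.adjMatrix ℝ G

/-- The double star `S_{n,n}`: two stars `K_{1,n-1}` with centers `Sum.inl none` and
`Sum.inr none`, joined by an edge between the two centers. It has `2n` vertices when `n ≥ 1`. -/
def doubleStar (n : ℕ) : SimpleGraph (Option (Fin (n - 1)) ⊕ Option (Fin (n - 1))) :=
  SimpleGraph.fromRel (fun a b =>
    (a = Sum.inl none ∧ ∃ i, b = Sum.inl (some i)) ∨
    (a = Sum.inr none ∧ ∃ i, b = Sum.inr (some i)) ∨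
    (a = Sum.inl none ∧ b = Sum.inr none))

/-! Adding the identity to the adjacency matrix of `S̄_{n,n}` gives `J - A(S_{n,n})`, and this
matrix is constant on the blocks of the partition into left leaves, left centre, right centre and
right leaves: it is the blow-up `P M Pᵀ` of the `4 × 4` matrix `M = J - A(P₄)` along the
partition, `P` being its incidence matrix. Since `χ(P (M Pᵀ)) = X ^ (2n - 4) χ((M Pᵀ) P)` and
`Pᵀ P` is the diagonal matrix of class sizes `(n - 1, 1, 1, n - 1)`, the characteristic
polynomial of `A + 1` is `X ^ (2n - 4)` times that of a `4 × 4` matrix, which splits into two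
quadratics. Substituting `X + 1` for `X` gives `χ(A)`, and the quadratic formula its roots. -/

open Finset Matrix SimpleGraph

namespace Matrix

variable {V W R : Type*} [Fintype V] [Fintype W] [DecidableEq V] [DecidableEq W] [CommRing R]

theorem charpoly_submatrix_self_of_card_le (M : Matrix W W R) (f : V → W)
    (h : Fintype.card W ≤ Fintype.card V) :
    (M.submatrix f f).charpoly =
      X ^ (Fintype.card V - Fintype.card W) *
        (M * diagonal fun w => (#{v | f v = w} : R)).charpoly := by
  set P : Matrix V W R := (1 : Matrix W W R).submatrix f id
  have hM : M.submatrix f f = P * (M * Pᵀ) := by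
    ext u v
    simp [P, mul_apply, one_apply]
  have hP : Pᵀ * P = diagonal fun w => (#{v | f v = w} : R) := by
    ext w w'
    rw [mul_apply, diagonal_apply, Finset.natCast_card_filter]
    by_cases hw : w = w'
    · subst hw
      simp +contextual [P, one_apply]
    · simp +contextual [P, one_apply, hw, Ne.symm hw]
  rw [hM, charpoly_mul_comm_of_le _ _ h, Matrix.mul_assoc, hP]

end Matrix

theorem adjMat_compl {V : Type*} [Fintype V] [DecidableEq V] (G : SimpleGraph V) :
    adjMat Gᶜ = of 1 - 1 - adjMat G := by
  ext u v
  by_cases huv : u = v <;> by_cases h : G.Adj u v <;> simp [adjMat, huv, h, one_apply]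

theorem adjMat_comap {V W : Type*} [Fintype V] [Fintype W] (f : V → W) (H : SimpleGraph W) :
    adjMat (H.comap f) = (adjMat H).submatrix f f := by
  ext u v
  by_cases h : H.Adj (f u) (f v) <;> simp [adjMat, h]

theorem X_sq_sub_C_mul_X_sub_C_eq {K : Type*} [Field K] [NeZero (2 : K)] {s q δ : K}
    (hδ : s ^ 2 + 4 * q = δ * δ) :
    X ^ 2 - C s * X - C q = (X - C ((s + δ) / 2)) * (X - C ((s - δ) / 2)) := by
  have hs : C s = C ((s + δ) / 2) + C ((s - δ) / 2) := by
    rw [← C_add]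
    congr 1
    field_simp
    ring
  have hq : C q = -(C ((s + δ) / 2) * C ((s - δ) / 2)) := by
    rw [← C_mul, ← C_neg]
    congr 1
    field_simp
    linear_combination hδ
  rw [hs, hq]
  ring

/-- The classes `0, 1, 2, 3` are the left leaves, the left centre, the right centre and the
right leaves, so that the double star is the pullback of the path `0 - 1 - 2 - 3`. -/
def doubleStarPart (n : ℕ) : Option (Fin (n - 1)) ⊕ Option (Fin (n - 1)) → Fin 4
  | .inl (some _) => 0
  | .inl none => 1
  | .inr none => 2
  | .inr (some _) => 3

theorem doubleStar_eq_comap (n : ℕ) :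
    doubleStar n = (pathGraph 4).comap (doubleStarPart n) := by
  ext u v
  rcases u with (_ | i) | (_ | i) <;> rcases v with (_ | j) | (_ | j) <;>
    simp [doubleStar, doubleStarPart, pathGraph_adj]

theorem card_doubleStarPart_fiber (n : ℕ) (k : Fin 4) :
    #{v | doubleStarPart n v = k} = ![n - 1, 1, 1, n - 1] k := by
  rw [Finset.card_filter]
  fin_cases k <;> simp [Fintype.sum_sum_type, doubleStarPart]

theorem card_doubleStar_vertices (n : ℕ) (hn : 1 ≤ n) :
    Fintype.card (Option (Fin (n - 1)) ⊕ Option (Fin (n - 1))) = 2 * n := by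
  simp only [Fintype.card_sum, Fintype.card_option, Fintype.card_fin]
  omega

/-- `(J - A(P₄)) * diagonal ![m, 1, 1, m]`: the quotient of `A(S̄) + 1` when each leaf class
has `m` vertices. -/
def doubleStarQuotient {R : Type*} [CommRing R] (m : R) : Matrix (Fin 4) (Fin 4) R :=
  !![m, 0, 1, m; 0, 1, 0, m; m, 0, 1, 0; m, 1, 0, m]

theorem charpoly_doubleStarQuotient {R : Type*} [CommRing R] (m : R) :
    (doubleStarQuotient m).charpoly =
      (X ^ 2 - C (2 * m + 1) * X + C m) * (X ^ 2 - X - C m) := by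
  rw [doubleStarQuotient, charpoly, det_succ_row_zero]
  simp [Fin.sum_univ_succ, det_succ_row_zero, charmatrix_apply, Fin.succAbove, map_ofNat]
  ring

theorem charpoly_adjMat_compl_doubleStar (n : ℕ) (hn : 2 ≤ n) :
    (adjMat (doubleStar n)ᶜ).charpoly =
      (X ^ 2 - C (2 * (n : ℝ) - 3) * X - C ((n : ℝ) - 1)) *
      (X ^ 2 + X - C ((n : ℝ) - 1)) * (X + 1) ^ (2 * n - 4) := by
  set M : Matrix (Fin 4) (Fin 4) ℝ := of 1 - adjMat (pathGraph 4)
  have hA : adjMat (doubleStar n)ᶜ =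
      M.submatrix (doubleStarPart n) (doubleStarPart n) - scalar _ 1 := by
    rw [adjMat_compl, doubleStar_eq_comap, adjMat_comap]
    ext u v
    simp [M, sub_right_comm]
  have hM : M * diagonal (fun k => (#{v | doubleStarPart n v = k} : ℝ)) =
      doubleStarQuotient ((n : ℝ) - 1) := by
    ext i j
    fin_cases i <;> fin_cases j <;>
      simp [M, doubleStarQuotient, card_doubleStarPart_fiber, adjMat, pathGraph_adj,
        Nat.cast_sub (by omega : 1 ≤ n)]
  have hcard := card_doubleStar_vertices n (by omega)
  rw [hA, charpoly_sub_scalar,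
    charpoly_submatrix_self_of_card_le _ _ (by rw [hcard, Fintype.card_fin]; omega), hM,
    charpoly_doubleStarQuotient, hcard, Fintype.card_fin]
  simp only [mul_comp, sub_comp, add_comp, pow_comp, X_comp, C_comp]
  simp only [map_sub, map_add, map_mul, map_one, map_natCast, map_ofNat]
  ring

/-- For every `n ≥ 3`, the multiset of adjacency eigenvalues of the
complement `S̄_{n,n}` of the double star consists of `(-1 ± √(4n-3))/2`,
`(2n - 3 ± √(4n² - 8n + 5))/2`, together with `-1` with multiplicity `2n - 4`;
equivalently, its characteristic polynomial is
`(x² - (2n-3)x - (n-1)) (x² + x - (n-1)) (x+1)^(2n-4)`. -/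
theorem doubleStarComplement_spectrum (n : ℕ) (hn : 3 ≤ n) :
    (adjMat ((doubleStar n)ᶜ)).charpoly.roots =
      ({(-1 + Real.sqrt (4 * (n : ℝ) - 3)) / 2,
        (-1 - Real.sqrt (4 * (n : ℝ) - 3)) / 2,
        (2 * (n : ℝ) - 3 + Real.sqrt (4 * (n : ℝ) ^ 2 - 8 * (n : ℝ) + 5)) / 2,
        (2 * (n : ℝ) - 3 - Real.sqrt (4 * (n : ℝ) ^ 2 - 8 * (n : ℝ) + 5)) / 2} +
       Multiset.replicate (2 * n - 4) (-1 : ℝ)) ∧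
    (adjMat ((doubleStar n)ᶜ)).charpoly =
      (X ^ 2 - C (2 * (n : ℝ) - 3) * X - C ((n : ℝ) - 1)) *
      (X ^ 2 + X - C ((n : ℝ) - 1)) * (X + 1) ^ (2 * n - 4) := by
  have hcharpoly := charpoly_adjMat_compl_doubleStar n (by omega)
  refine ⟨?_, hcharpoly⟩
  have hn' : (3 : ℝ) ≤ n := by exact_mod_cast hn
  have hX : X ^ 2 + X - C ((n : ℝ) - 1) = X ^ 2 - C (-1) * X - C ((n : ℝ) - 1) := by simp
  rw [hcharpoly, hX,
    X_sq_sub_C_mul_X_sub_C_eq (s := -1) (δ := √(4 * (n : ℝ) - 3))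
      (by rw [Real.mul_self_sqrt (by linarith)]; ring),
    X_sq_sub_C_mul_X_sub_C_eq (s := 2 * (n : ℝ) - 3) (δ := √(4 * (n : ℝ) ^ 2 - 8 * n + 5))
      (by rw [Real.mul_self_sqrt (by nlinarith)]; ring),
    ← roots_multiset_prod_X_sub_C (_ + Multiset.replicate (2 * n - 4) (-1 : ℝ))]
  congr 1
  simp [Multiset.prod_replicate]
  ring
end

section
/- Let G be a simple graph on n vertices, let e be an edge of G and H = G − e, and let λ_1 ≥ ⋯ ≥ λ_n and θ_1 ≥ ⋯ ≥ θ_n denote the eigenvalues of the adjacency matrices A(G) and A(H), respectively. Then for every t with 1 ≤ t ≤ n, Σ_{j=1}^{t} λ_j ≥ (Σ_{j=1}^{t} θ_j) − 1. -/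
/-!
Write `A(H) = A(G) - E` with `E = e_u e_vᵀ + e_v e_uᵀ` for the deleted edge `uv`, so that
`xᵀ A(H) x = xᵀ A(G) x - 2 x_u x_v ≤ xᵀ A(G) x + (x_u - x_v)² / 2`.
Evaluate this on the top `t` orthonormal eigenvectors `w_j` of `A(H)`: the left sides add up to
`θ_1 + ⋯ + θ_t`, Ky Fan's maximum principle bounds `∑ wⱼᵀ A(G) wⱼ` by `λ_1 + ⋯ + λ_t`, and
Bessel's inequality bounds `∑ (w_j(u) - w_j(v))²` by `‖e_u - e_v‖² = 2`.
-/

open Polynomial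

open Finset Matrix
open scoped RealInnerProductSpace

theorem sum_mul_le_sum_range_of_antitone {f : ℕ → ℝ} (hf : Antitone f) {n t : ℕ}
    (ht : 1 ≤ t) (htn : t ≤ n) {c : Fin n → ℝ} (hc₀ : ∀ k, 0 ≤ c k) (hc₁ : ∀ k, c k ≤ 1)
    (hc : ∑ k, c k = t) :
    ∑ k : Fin n, f k * c k ≤ ∑ j ∈ range t, f j := by
  -- `m` separates the first `t` values of `f` from the remaining ones.
  set m := f (t - 1)
  have hle : ∀ k : Fin n, (f k - m) * c k ≤ if (k : ℕ) < t then f k - m else 0 := by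
    intro k
    split_ifs with hk
    · exact mul_le_of_le_one_right (sub_nonneg.2 (hf (by omega))) (hc₁ k)
    · exact mul_nonpos_of_nonpos_of_nonneg (sub_nonpos.2 (hf (by omega))) (hc₀ k)
  have htrunc : ∑ k : Fin n, (if (k : ℕ) < t then f k - m else 0) = ∑ j ∈ range t, (f j - m) := by
    rw [Fin.sum_univ_eq_sum_range (fun j => if j < t then f j - m else 0), ← sum_filter]
    congr 1
    ext j
    simp only [mem_filter, mem_range]
    omega
  calc ∑ k : Fin n, f k * c k = ∑ k : Fin n, (f k - m) * c k + m * t := by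
        simp only [sub_mul, sum_sub_distrib, ← mul_sum, hc]; ring
    _ ≤ ∑ j ∈ range t, (f j - m) + m * t := by
        grw [sum_le_sum fun k _ => hle k, htrunc]
    _ = ∑ j ∈ range t, f j := by simp [sum_sub_distrib]; ring

namespace LinearMap.IsSymmetric

variable {E : Type*} [NormedAddCommGroup E] [InnerProductSpace ℝ E] [FiniteDimensional ℝ E]
  {T : E →ₗ[ℝ] E} {n : ℕ} (hT : T.IsSymmetric) (hn : Module.finrank ℝ E = n)
include hT hn

theorem inner_eigenvectorBasis_apply (k : Fin n) :
    ⟪hT.eigenvectorBasis hn k, T (hT.eigenvectorBasis hn k)⟫ = hT.eigenvalues hn k := by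
  rw [apply_eigenvectorBasis, RCLike.ofReal_real_eq_id, id_eq, real_inner_smul_right,
    real_inner_self_eq_norm_sq, (hT.eigenvectorBasis hn).orthonormal.1 k]
  ring

theorem inner_apply_self_eq_sum (x : E) :
    ⟪x, T x⟫ = ∑ k, hT.eigenvalues hn k * ⟪hT.eigenvectorBasis hn k, x⟫ ^ 2 := by
  rw [← (hT.eigenvectorBasis hn).sum_inner_mul_inner]
  refine sum_congr rfl fun k _ => ?_
  rw [← hT, apply_eigenvectorBasis, RCLike.ofReal_real_eq_id, id_eq, real_inner_smul_left,
    real_inner_comm x]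
  ring

theorem eigenvalues_eq_of_roots_charpoly {lam : ℕ → ℝ} (hlam : Antitone lam)
    (h : T.charpoly.roots = (Multiset.range n).map lam) (k : Fin n) :
    hT.eigenvalues hn k = lam k := by
  have hperm : (List.ofFn (hT.eigenvalues hn)).Perm (List.ofFn fun k : Fin n => lam k) := by
    have hrange : (Multiset.range n).map lam = List.ofFn fun k : Fin n => lam k := by
      rw [Multiset.range, Multiset.map_coe, Multiset.coe_eq_coe]
      refine .of_eq (List.ext_getElem ?_ ?_) <;> simp
    rw [← Multiset.coe_eq_coe, ← Fin.univ_val_map, ← hrange, ← h,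
      hT.roots_charpoly_eq_eigenvalues hn, RCLike.ofReal_real_eq_id, Function.id_comp]
  have := hperm.eq_of_sortedGE (hT.eigenvalues_antitone hn).sortedGE_ofFn
    (hlam.comp_monotone Fin.val_strictMono.monotone).sortedGE_ofFn
  exact congrFun (List.ofFn_injective this) k

theorem sum_inner_apply_le {lam : ℕ → ℝ} (hlam : Antitone lam)
    (heig : ∀ k, hT.eigenvalues hn k = lam k) {t : ℕ} (ht : 1 ≤ t) (htn : t ≤ n)
    {v : Fin t → E} (hv : Orthonormal ℝ v) :
    ∑ i, ⟪v i, T (v i)⟫ ≤ ∑ j ∈ Finset.range t, lam j := by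
  set b := hT.eigenvectorBasis hn
  set c : Fin n → ℝ := fun k => ∑ i, ⟪b k, v i⟫ ^ 2
  have hc₁ : ∀ k, c k ≤ 1 := fun k => calc
    c k = ∑ i, ‖⟪v i, b k⟫‖ ^ 2 := by simp [c, real_inner_comm]
    _ ≤ ‖b k‖ ^ 2 := hv.sum_inner_products_le _
    _ = 1 := by simp [b.orthonormal.1 k]
  have hc : ∑ k, c k = t := by
    rw [sum_comm]
    simp [b.sum_sq_inner_right, hv.1]
  calc ∑ i, ⟪v i, T (v i)⟫ = ∑ k : Fin n, lam k * c k := by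
        simp only [hT.inner_apply_self_eq_sum hn, heig, c, mul_sum]
        exact sum_comm
    _ ≤ ∑ j ∈ Finset.range t, lam j :=
        sum_mul_le_sum_range_of_antitone hlam ht htn (fun k => by positivity) hc₁ hc

end LinearMap.IsSymmetric

theorem sum_range_eigenvalues_le_add_of_inner_apply_le {E : Type*} [NormedAddCommGroup E]
    [InnerProductSpace ℝ E] [FiniteDimensional ℝ E] {S T : E →ₗ[ℝ] E} {n : ℕ}
    (hS : S.IsSymmetric) (hT : T.IsSymmetric) (hn : Module.finrank ℝ E = n)
    {lam θ : ℕ → ℝ} (hlam : Antitone lam) (hS_eig : ∀ k, hS.eigenvalues hn k = lam k)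
    (hT_eig : ∀ k, hT.eigenvalues hn k = θ k) {c : ℝ} (hc : 0 ≤ c) (z : E)
    (hST : ∀ x, ⟪x, T x⟫ ≤ ⟪x, S x⟫ + c * ⟪z, x⟫ ^ 2) {t : ℕ} (ht : 1 ≤ t) (htn : t ≤ n) :
    ∑ j ∈ range t, θ j ≤ ∑ j ∈ range t, lam j + c * ‖z‖ ^ 2 := by
  set w : Fin t → E := fun j => hT.eigenvectorBasis hn (Fin.castLE htn j)
  have hw : Orthonormal ℝ w :=
    (hT.eigenvectorBasis hn).orthonormal.comp _ (Fin.castLE_injective htn)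
  have hbessel : ∑ j, ⟪z, w j⟫ ^ 2 ≤ ‖z‖ ^ 2 := by
    simpa [real_inner_comm] using hw.sum_inner_products_le z (s := univ)
  calc ∑ j ∈ range t, θ j = ∑ j, ⟪w j, T (w j)⟫ := by
        rw [← Fin.sum_univ_eq_sum_range]
        exact sum_congr rfl fun j _ => by rw [hT.inner_eigenvectorBasis_apply, hT_eig]; rfl
    _ ≤ ∑ j, (⟪w j, S (w j)⟫ + c * ⟪z, w j⟫ ^ 2) := sum_le_sum fun j _ => hST (w j)
    _ ≤ ∑ j ∈ range t, lam j + c * ‖z‖ ^ 2 := by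
        rw [sum_add_distrib, ← mul_sum]
        grw [hS.sum_inner_apply_le hn hlam hS_eig ht htn hw, hbessel]

theorem Matrix.charpoly_toEuclideanLin {ι : Type*} [Fintype ι] [DecidableEq ι]
    (A : Matrix ι ι ℝ) : A.toEuclideanLin.charpoly = A.charpoly := by
  simp [toLpLin_eq_toLin]

theorem Matrix.inner_toEuclideanLin_self {ι : Type*} [Fintype ι] [DecidableEq ι]
    (A : Matrix ι ι ℝ) (x : EuclideanSpace ℝ ι) :
    ⟪x, A.toEuclideanLin x⟫ = x.ofLp ⬝ᵥ (A *ᵥ x.ofLp) := by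
  simp [EuclideanSpace.inner_eq_star_dotProduct, dotProduct_comm]

theorem EuclideanSpace.norm_single_sub_single_sq {ι : Type*} [Fintype ι] [DecidableEq ι]
    {u v : ι} (h : u ≠ v) : ‖single u (1 : ℝ) - single v 1‖ ^ 2 = 2 := by
  rw [← real_inner_self_eq_norm_sq, inner_sub_left, inner_sub_right, inner_sub_right]
  norm_num [inner_single_left, h, h.symm]

section

variable {V : Type*} [Fintype V]

theorem adjMat_apply (G : SimpleGraph V) [DecidableRel G.Adj] (a b : V) :
    adjMat G a b = if G.Adj a b then 1 else 0 := by
  simp [adjMat]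

theorem isHermitian_adjMat (G : SimpleGraph V) : (adjMat G).IsHermitian :=
  letI := Classical.decRel G.Adj
  G.isHermitian_adjMatrix ℝ

theorem adjMat_eq_adjMat_deleteEdges_add [DecidableEq V] {G : SimpleGraph V} {u v : V}
    (h : G.Adj u v) :
    adjMat G = adjMat (G.deleteEdges {s(u, v)}) + (single u v 1 + single v u 1) := by
  classical
  ext a b
  simp only [Matrix.add_apply, adjMat_apply, single_apply, SimpleGraph.deleteEdges_adj,
    Set.mem_singleton_iff, Sym2.eq_iff]
  by_cases hab : G.Adj a b <;> grind [SimpleGraph.Adj.ne, SimpleGraph.adj_symm]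

theorem inner_toEuclideanLin_adjMat_deleteEdges_le [DecidableEq V] {G : SimpleGraph V}
    {u v : V} (h : G.Adj u v) (x : EuclideanSpace ℝ V) :
    ⟪x, (adjMat (G.deleteEdges {s(u, v)})).toEuclideanLin x⟫ ≤
      ⟪x, (adjMat G).toEuclideanLin x⟫ +
        1 / 2 * ⟪EuclideanSpace.single u 1 - EuclideanSpace.single v 1, x⟫ ^ 2 := by
  have hquad : ⟪x, (adjMat G).toEuclideanLin x⟫ =
      ⟪x, (adjMat (G.deleteEdges {s(u, v)})).toEuclideanLin x⟫ + 2 * x u * x v := by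
    rw [adjMat_eq_adjMat_deleteEdges_add h, inner_toEuclideanLin_self,
      inner_toEuclideanLin_self, add_mulVec, dotProduct_add, add_mulVec, dotProduct_add,
      single_mulVec_eq, single_mulVec_eq, dotProduct_smul, dotProduct_smul, dotProduct_single,
      dotProduct_single, smul_eq_mul, smul_eq_mul]
    ring
  have hsingle : ⟪EuclideanSpace.single u 1 - EuclideanSpace.single v 1, x⟫ = x u - x v := by
    simp [inner_sub_left, EuclideanSpace.inner_single_left]
  rw [hquad, hsingle]
  nlinarith [sq_nonneg (x u + x v)]

end

/-- Let `G` be a simple graph on `n` vertices, `e ∈ E(G)`, `H = G - e`,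
with `lam` and `θ` the nonincreasing lists of eigenvalues of `A(G)` and `A(H)` (0-indexed).
Then for every `1 ≤ t ≤ n`, `Σ_{j=1}^t λ_j ≥ (Σ_{j=1}^t θ_j) - 1`. -/
theorem partial_sum_eigenvalues_edge_deletion {n : ℕ}
    (G H : SimpleGraph (Fin n)) (e : Sym2 (Fin n)) (he : e ∈ G.edgeSet)
    (hH : H = G.deleteEdges {e})
    (lam θ : ℕ → ℝ) (hlam_mono : Antitone lam) (hθ_mono : Antitone θ)
    (hlam : (adjMat G).charpoly.roots = (Multiset.range n).map lam)
    (hθ : (adjMat H).charpoly.roots = (Multiset.range n).map θ) :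
    ∀ t : ℕ, 1 ≤ t → t ≤ n →
      ∑ j ∈ Finset.range t, lam j ≥ (∑ j ∈ Finset.range t, θ j) - 1 := by
  intro t ht htn
  induction e using Sym2.ind with | _ u v => ?_
  subst hH
  have huv : G.Adj u v := he
  have hn : Module.finrank ℝ (EuclideanSpace ℝ (Fin n)) = n := finrank_euclideanSpace_fin
  have hG := isSymmetric_toEuclideanLin_iff.2 (isHermitian_adjMat G)
  have hH := isSymmetric_toEuclideanLin_iff.2 (isHermitian_adjMat (G.deleteEdges {s(u, v)}))
  have key := sum_range_eigenvalues_le_add_of_inner_apply_le hG hH hn hlam_mono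
    (hG.eigenvalues_eq_of_roots_charpoly hn hlam_mono (by rwa [charpoly_toEuclideanLin]))
    (hH.eigenvalues_eq_of_roots_charpoly hn hθ_mono (by rwa [charpoly_toEuclideanLin]))
    (by norm_num) _ (inner_toEuclideanLin_adjMat_deleteEdges_le huv) ht htn
  rw [EuclideanSpace.norm_single_sub_single_sq huv.ne] at key
  linarith
end

section
/- Let G be a simple graph on n vertices, let e be an edge of G and H = G − e, and let λ_1 ≥ ⋯ ≥ λ_n and θ_1 ≥ ⋯ ≥ θ_n denote the eigenvalues of the adjacency matrices A(G) and A(H), respectively. Suppose H has exactly r ≥ 2 positive eigenvalues. Then for every t with 2 ≤ t ≤ r, λ_1 + Σ_{k=2}^{t} max{λ_k, 0} ≥ θ_1 + Σ_{k=3}^{t} θ_k. -/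
open Polynomial

/-!
Write `A = A(G)`, `B = A(H)` and `e = ij`. Since `0 ≤ B ≤ A` entrywise, the Rayleigh quotient
of `B` at a unit eigenvector `v` is at most that of `A` at `|v|`, whence `θ₁ ≤ λ₁`.
On the hyperplane `z_i = z_j` the quadratic form of `A - B`, which is `2 z_i z_j`, is
nonnegative. By a dimension count this hyperplane meets the span of the eigenvectors of `A`
for `λ_{k-1}, …, λ_n` and that of the eigenvectors of `B` for `θ_1, …, θ_k` in a nonzero
vector, which forces `θ_k ≤ λ_{k-1}`. Summing `θ_k ≤ max(λ_{k-1}, 0)` over `3 ≤ k ≤ t`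
and adding `θ₁ ≤ λ₁` gives the claim.
-/

open Finset Matrix
open scoped RealInnerProductSpace

theorem Submodule.finrank_add_finrank_le_finrank_inf_add {K V : Type*} [DivisionRing K]
    [AddCommGroup V] [Module K V] [FiniteDimensional K V] (U W : Submodule K V) :
    Module.finrank K U + Module.finrank K W ≤ Module.finrank K ↥(U ⊓ W) + Module.finrank K V := by
  have := Submodule.finrank_sup_add_finrank_inf_eq U W
  have := (U ⊔ W).finrank_le
  omega

theorem Submodule.exists_ne_zero_mem_of_finrank_add_lt {K V : Type*} [Field K]
    [AddCommGroup V] [Module K V] [FiniteDimensional K V] (U W Y : Submodule K V)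
    (h : 2 * Module.finrank K V < Module.finrank K U + Module.finrank K W + Module.finrank K Y) :
    ∃ z ≠ 0, z ∈ U ∧ z ∈ W ∧ z ∈ Y := by
  have hUW := U.finrank_add_finrank_le_finrank_inf_add W
  have hUWY := (U ⊓ W).finrank_add_finrank_le_finrank_inf_add Y
  obtain ⟨z, hz, hz0⟩ := Submodule.exists_mem_ne_zero_of_ne_bot
    (Submodule.one_le_finrank_iff.mp (by omega : 1 ≤ Module.finrank K ↥(U ⊓ W ⊓ Y)))
  exact ⟨z, hz0, hz.1.1, hz.1.2, hz.2⟩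

section Eigenbasis

variable {ι E : Type*} [Fintype ι] [NormedAddCommGroup E] [InnerProductSpace ℝ E]

theorem OrthonormalBasis.norm_sq_eq_sum_repr_sq (b : OrthonormalBasis ι ℝ E) (z : E) :
    ‖z‖ ^ 2 = ∑ i, b.repr z i ^ 2 := by
  simp [← b.sum_sq_norm_inner_right, b.repr_apply_apply]

theorem OrthonormalBasis.repr_eq_zero_of_mem_span (b : OrthonormalBasis ι ℝ E) {S : Set ι}
    {z : E} (hz : z ∈ Submodule.span ℝ (b '' S)) {i : ι} (hi : i ∉ S) : b.repr z i = 0 := by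
  have : z ∈ LinearMap.ker (innerₛₗ ℝ (b i)) := by
    refine Submodule.span_le.mpr ?_ hz
    rintro _ ⟨j, hj, rfl⟩
    exact b.orthonormal.2 (ne_of_mem_of_not_mem hj hi).symm
  simpa [b.repr_apply_apply] using this

theorem OrthonormalBasis.finrank_span_image (b : OrthonormalBasis ι ℝ E) (S : Finset ι) :
    Module.finrank ℝ (Submodule.span ℝ (b '' S)) = #S := by
  have hli : LinearIndependent ℝ (fun i : (S : Set ι) => b i) :=
    b.orthonormal.linearIndependent.comp _ Subtype.val_injective
  rw [Set.image_eq_range, finrank_span_eq_card hli]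
  simp

variable {T : E →ₗ[ℝ] E} {b : OrthonormalBasis ι ℝ E} {μ : ι → ℝ}

theorem inner_map_self_eq_sum_of_eigenbasis (hb : ∀ i, T (b i) = μ i • b i) (z : E) :
    ⟪z, T z⟫ = ∑ i, μ i * b.repr z i ^ 2 := by
  nth_rewrite 2 [← b.sum_repr z]
  simp only [map_sum, map_smul, hb, inner_sum, real_inner_smul_right]
  refine sum_congr rfl fun i _ => ?_
  rw [real_inner_comm, ← b.repr_apply_apply]
  ring

theorem inner_map_self_le_of_mem_span (hb : ∀ i, T (b i) = μ i • b i) {S : Set ι} {a : ℝ}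
    (hS : ∀ i ∈ S, μ i ≤ a) {z : E} (hz : z ∈ Submodule.span ℝ (b '' S)) :
    ⟪z, T z⟫ ≤ a * ‖z‖ ^ 2 := by
  rw [inner_map_self_eq_sum_of_eigenbasis hb, b.norm_sq_eq_sum_repr_sq, mul_sum]
  refine sum_le_sum fun i _ => ?_
  by_cases hi : i ∈ S
  · exact mul_le_mul_of_nonneg_right (hS i hi) (sq_nonneg _)
  · simp [b.repr_eq_zero_of_mem_span hz hi]

theorem inner_map_self_le_of_forall_le (hb : ∀ i, T (b i) = μ i • b i) {a : ℝ}
    (ha : ∀ i, μ i ≤ a) (z : E) : ⟪z, T z⟫ ≤ a * ‖z‖ ^ 2 :=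
  inner_map_self_le_of_mem_span hb (S := Set.univ) (fun i _ => ha i)
    (by simpa using b.toBasis.mem_span z)

theorem le_inner_map_self_of_mem_span (hb : ∀ i, T (b i) = μ i • b i) {S : Set ι} {c : ℝ}
    (hS : ∀ i ∈ S, c ≤ μ i) {z : E} (hz : z ∈ Submodule.span ℝ (b '' S)) :
    c * ‖z‖ ^ 2 ≤ ⟪z, T z⟫ := by
  rw [inner_map_self_eq_sum_of_eigenbasis hb, b.norm_sq_eq_sum_repr_sq, mul_sum]
  refine sum_le_sum fun i _ => ?_
  by_cases hi : i ∈ S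
  · exact mul_le_mul_of_nonneg_right (hS i hi) (sq_nonneg _)
  · simp [b.repr_eq_zero_of_mem_span hz hi]

theorem le_of_inner_map_self_le_on [FiniteDimensional ℝ E] {S : E →ₗ[ℝ] E}
    {b' : OrthonormalBasis ι ℝ E} {σ : ι → ℝ} (hb : ∀ i, T (b i) = μ i • b i)
    (hb' : ∀ i, S (b' i) = σ i • b' i) (Y : Submodule ℝ E) (hY : ∀ z ∈ Y, ⟪z, S z⟫ ≤ ⟪z, T z⟫)
    {a c : ℝ} (hcard : 2 * Module.finrank ℝ E <
      #{i | μ i ≤ a} + #{i | c ≤ σ i} + Module.finrank ℝ Y) :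
    c ≤ a := by
  obtain ⟨z, hz0, hzT, hzS, hzY⟩ := Submodule.exists_ne_zero_mem_of_finrank_add_lt
    (Submodule.span ℝ (b '' ↑(univ.filter fun i => μ i ≤ a)))
    (Submodule.span ℝ (b' '' ↑(univ.filter fun i => c ≤ σ i))) Y
    (by rwa [b.finrank_span_image, b'.finrank_span_image])
  have hlow := le_inner_map_self_of_mem_span hb' (fun i hi => by simpa using hi) hzS
  have hup := inner_map_self_le_of_mem_span hb (fun i hi => by simpa using hi) hzT
  exact le_of_mul_le_mul_right (hlow.trans ((hY z hzY).trans hup)) (by positivity)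

end Eigenbasis

theorem LinearMap.finrank_le_finrank_ker_add_one {K V : Type*} [Field K] [AddCommGroup V]
    [Module K V] [FiniteDimensional K V] (f : V →ₗ[K] K) :
    Module.finrank K V ≤ Module.finrank K (LinearMap.ker f) + 1 := by
  have := f.finrank_range_add_finrank_ker
  have := (LinearMap.range f).finrank_le
  rw [Module.finrank_self] at this
  omega

theorem Antitone.sub_le_card_filter_le {α : Type*} [Preorder α] [DecidableLE α] {f : ℕ → α}
    (hf : Antitone f) (k m : ℕ) : m - k ≤ #{j ∈ range m | f j ≤ f k} := by
  rw [← Nat.card_Ico]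
  refine card_le_card fun j hj => ?_
  rw [mem_Ico] at hj
  simpa [hj.2] using hf hj.1

theorem Antitone.lt_card_filter_le {α : Type*} [Preorder α] [DecidableLE α] {f : ℕ → α}
    (hf : Antitone f) {k m : ℕ} (hk : k < m) : k < #{j ∈ range m | f k ≤ f j} := by
  rw [Nat.lt_iff_add_one_le, ← card_range (k + 1)]
  refine card_le_card fun j hj => ?_
  rw [mem_range] at hj
  simpa [hj.trans_le hk] using hf (Nat.lt_succ_iff.mp hj)

section Matrix

variable {ι : Type*} [Fintype ι] [DecidableEq ι]

theorem Matrix.inner_toEuclideanLin_self_s10 (A : Matrix ι ι ℝ) (z : EuclideanSpace ℝ ι) :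
    ⟪z, toEuclideanLin A z⟫ = ∑ a, ∑ b, A a b * z a * z b := by
  simp only [toLpLin_apply, PiLp.inner_apply, RCLike.inner_apply, conj_trivial, mulVec,
    dotProduct, sum_mul]
  exact sum_congr rfl fun a _ => sum_congr rfl fun b _ => by ring

theorem Matrix.IsHermitian.toEuclideanLin_eigenvectorBasis {A : Matrix ι ι ℝ}
    (hA : A.IsHermitian) (i : ι) :
    toEuclideanLin A (hA.eigenvectorBasis i) = hA.eigenvalues i • hA.eigenvectorBasis i := by
  ext a
  simpa [toLpLin_apply] using congrFun (hA.mulVec_eigenvectorBasis i) a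

theorem Matrix.IsHermitian.eigenvalues_le_of_le_of_nonneg {A B : Matrix ι ι ℝ}
    (hB : B.IsHermitian) (hB0 : ∀ a b, 0 ≤ B a b) (hBA : ∀ a b, B a b ≤ A a b) {c : ℝ}
    (hA : ∀ z, ⟪z, toEuclideanLin A z⟫ ≤ c * ‖z‖ ^ 2) (j : ι) : hB.eigenvalues j ≤ c := by
  set v := hB.eigenvectorBasis j
  set w : EuclideanSpace ℝ ι := WithLp.toLp 2 fun a => |v a|
  have hv : ‖v‖ = 1 := hB.eigenvectorBasis.orthonormal.1 j
  have hw : ‖w‖ = ‖v‖ := by simp [EuclideanSpace.norm_eq, w]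
  calc hB.eigenvalues j = ⟪v, toEuclideanLin B v⟫ := by
        rw [hB.toEuclideanLin_eigenvectorBasis, real_inner_smul_right,
          real_inner_self_eq_norm_sq, hv]
        ring
    _ ≤ ⟪w, toEuclideanLin A w⟫ := by
        rw [inner_toEuclideanLin_self_s10, inner_toEuclideanLin_self_s10]
        refine sum_le_sum fun a _ => sum_le_sum fun b _ => ?_
        calc B a b * v a * v b ≤ B a b * |v a| * |v b| := by
              rw [mul_assoc, mul_assoc, ← abs_mul]
              exact mul_le_mul_of_nonneg_left (le_abs_self _) (hB0 a b)
          _ ≤ A a b * |v a| * |v b| := by gcongr; exact hBA a b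
    _ ≤ c * ‖w‖ ^ 2 := hA w
    _ = c := by rw [hw, hv]; ring

theorem Matrix.IsHermitian.roots_charpoly_eq_map_eigenvalues {A : Matrix ι ι ℝ}
    (hA : A.IsHermitian) : A.charpoly.roots = univ.val.map hA.eigenvalues :=
  hA.roots_charpoly_eq_eigenvalues

theorem Matrix.IsHermitian.card_filter_eigenvalues_eq {A : Matrix ι ι ℝ} (hA : A.IsHermitian)
    {m : ℕ} {f : ℕ → ℝ} (h : A.charpoly.roots = (Multiset.range m).map f)
    (p : ℝ → Prop) [DecidablePred p] :
    #{i | p (hA.eigenvalues i)} = #{k ∈ range m | p (f k)} := by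
  have := congrArg (Multiset.countP p) (hA.roots_charpoly_eq_map_eigenvalues.symm.trans h)
  rwa [Multiset.countP_map, Multiset.countP_map] at this

theorem Matrix.IsHermitian.le_of_mem_roots_charpoly_of_nonneg_of_le {A B : Matrix ι ι ℝ}
    (hA : A.IsHermitian) (hB : B.IsHermitian) (hB0 : ∀ a b, 0 ≤ B a b)
    (hBA : ∀ a b, B a b ≤ A a b) {c : ℝ} (hc : ∀ x ∈ A.charpoly.roots, x ≤ c) {x : ℝ}
    (hx : x ∈ B.charpoly.roots) : x ≤ c := by
  rw [hB.roots_charpoly_eq_map_eigenvalues] at hx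
  obtain ⟨j, -, rfl⟩ := Multiset.mem_map.mp hx
  refine hB.eigenvalues_le_of_le_of_nonneg hB0 hBA
    (inner_map_self_le_of_forall_le hA.toEuclideanLin_eigenvectorBasis fun i => hc _ ?_) j
  rw [hA.roots_charpoly_eq_map_eigenvalues]
  exact Multiset.mem_map_of_mem _ (mem_univ i)

theorem Matrix.IsHermitian.le_of_inner_map_self_le_on_hyperplane {n : ℕ}
    {A B : Matrix (Fin n) (Fin n) ℝ} (hA : A.IsHermitian) (hB : B.IsHermitian)
    {lam θ : ℕ → ℝ} (hlam_mono : Antitone lam) (hθ_mono : Antitone θ)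
    (hlam : A.charpoly.roots = (Multiset.range n).map lam)
    (hθ : B.charpoly.roots = (Multiset.range n).map θ)
    (Y : Submodule ℝ (EuclideanSpace ℝ (Fin n))) (hY : n ≤ Module.finrank ℝ Y + 1)
    (hBA : ∀ z ∈ Y, ⟪z, toEuclideanLin B z⟫ ≤ ⟪z, toEuclideanLin A z⟫)
    {k : ℕ} (hk : 1 ≤ k) (hkn : k < n) : θ k ≤ lam (k - 1) := by
  refine le_of_inner_map_self_le_on hA.toEuclideanLin_eigenvectorBasis
    hB.toEuclideanLin_eigenvectorBasis Y hBA ?_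
  rw [hA.card_filter_eigenvalues_eq hlam (· ≤ lam (k - 1)),
    hB.card_filter_eigenvalues_eq hθ (θ k ≤ ·), finrank_euclideanSpace_fin]
  have := hlam_mono.sub_le_card_filter_le (k - 1) n
  have := hθ_mono.lt_card_filter_le hkn
  omega

end Matrix

section Graph

variable {V : Type*} [Fintype V]

theorem adjMat_apply_of_adj {G : SimpleGraph V} {a b : V} (h : G.Adj a b) : adjMat G a b = 1 := by
  simp [adjMat, h]

theorem adjMat_apply_of_not_adj {G : SimpleGraph V} {a b : V} (h : ¬G.Adj a b) :
    adjMat G a b = 0 := by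
  simp [adjMat, h]

theorem adjMat_nonneg (G : SimpleGraph V) (a b : V) : 0 ≤ adjMat G a b := by
  by_cases h : G.Adj a b
  · simp [adjMat_apply_of_adj h]
  · simp [adjMat_apply_of_not_adj h]

theorem adjMat_mono {G H : SimpleGraph V} (hle : H ≤ G) (a b : V) :
    adjMat H a b ≤ adjMat G a b := by
  by_cases h : H.Adj a b
  · rw [adjMat_apply_of_adj h, adjMat_apply_of_adj (hle h)]
  · simpa [adjMat_apply_of_not_adj h] using adjMat_nonneg G a b

theorem inner_toEuclideanLin_adjMat_deleteEdges_le_s10 [DecidableEq V] (G : SimpleGraph V) {i j : V}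
    {z : EuclideanSpace ℝ V}
    (hz : z ∈ LinearMap.ker (EuclideanSpace.projₗ i - EuclideanSpace.projₗ j)) :
    ⟪z, toEuclideanLin (adjMat (G.deleteEdges {s(i, j)})) z⟫ ≤
      ⟪z, toEuclideanLin (adjMat G) z⟫ := by
  replace hz : z i = z j := by simpa [sub_eq_zero] using hz
  rw [inner_toEuclideanLin_self_s10, inner_toEuclideanLin_self_s10]
  refine sum_le_sum fun a _ => sum_le_sum fun b _ => ?_
  by_cases hH : (G.deleteEdges {s(i, j)}).Adj a b
  · rw [adjMat_apply_of_adj hH, adjMat_apply_of_adj (G.deleteEdges_le _ hH)]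
  by_cases hG : G.Adj a b
  · have hab : a = i ∧ b = j ∨ a = j ∧ b = i := by simpa [hG, or_iff_not_imp_left] using hH
    rw [adjMat_apply_of_not_adj hH, adjMat_apply_of_adj hG]
    rcases hab with ⟨rfl, rfl⟩ | ⟨rfl, rfl⟩ <;> simp [hz, mul_self_nonneg]
  · simp [adjMat_apply_of_not_adj hH, adjMat_apply_of_not_adj hG]

end Graph

theorem add_sum_Ico_two_le_add_sum_Ico_max {lam θ : ℕ → ℝ} {t : ℕ} (h0 : θ 0 ≤ lam 0)
    (hshift : ∀ k ∈ Ico 2 t, θ k ≤ lam (k - 1)) :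
    θ 0 + ∑ k ∈ Ico 2 t, θ k ≤ lam 0 + ∑ k ∈ Ico 1 t, max (lam k) 0 := by
  have hreindex : ∑ k ∈ Ico 2 t, max (lam (k - 1)) 0 = ∑ k ∈ Ico 1 (t - 1), max (lam k) 0 := by
    rw [sum_Ico_eq_sum_range, sum_Ico_eq_sum_range, Nat.sub_sub]
    exact sum_congr rfl fun k _ => by rw [show 2 + k - 1 = 1 + k by omega]
  have hsum := calc
    ∑ k ∈ Ico 2 t, θ k ≤ ∑ k ∈ Ico 2 t, max (lam (k - 1)) 0 :=
      sum_le_sum fun k hk => (hshift k hk).trans (le_max_left _ _)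
    _ = ∑ k ∈ Ico 1 (t - 1), max (lam k) 0 := hreindex
    _ ≤ ∑ k ∈ Ico 1 t, max (lam k) 0 :=
      sum_le_sum_of_subset_of_nonneg (Ico_subset_Ico_right (Nat.sub_le t 1))
        fun _ _ _ => le_max_right _ _
  linarith

theorem majorization_sum_positive_part_general {n : ℕ}
    (G H : SimpleGraph (Fin n)) (e : Sym2 (Fin n))
    (hH : H = G.deleteEdges {e})
    (lam θ : ℕ → ℝ) (hlam_mono : Antitone lam) (hθ_mono : Antitone θ)
    (hlam : (adjMat G).charpoly.roots = (Multiset.range n).map lam)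
    (hθ : (adjMat H).charpoly.roots = (Multiset.range n).map θ)
    (r : ℕ)
    (hrcard : ((Finset.range n).filter (fun i => 0 < θ i)).card = r) :
    ∀ t : ℕ, 2 ≤ t → t ≤ r →
      lam 0 + ∑ k ∈ Finset.Ico 1 t, max (lam k) 0 ≥ θ 0 + ∑ k ∈ Finset.Ico 2 t, θ k := by
  intro t ht2 htr
  obtain ⟨i, j⟩ := e
  subst hH
  have hA := isHermitian_adjMat G
  have hB := isHermitian_adjMat (G.deleteEdges {s(i, j)})
  have hrn : r ≤ n := hrcard ▸ (card_filter_le _ _).trans (card_range n).le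
  refine add_sum_Ico_two_le_add_sum_Ico_max ?_ fun k hk => ?_
  · refine hA.le_of_mem_roots_charpoly_of_nonneg_of_le hB (adjMat_nonneg _)
      (adjMat_mono (G.deleteEdges_le _)) ?_
      (hθ ▸ Multiset.mem_map_of_mem θ (Multiset.mem_range.mpr (by omega)))
    simpa [hlam] using fun k _ => hlam_mono k.zero_le
  · rw [mem_Ico] at hk
    have hY := LinearMap.finrank_le_finrank_ker_add_one
      (EuclideanSpace.projₗ i - EuclideanSpace.projₗ j : EuclideanSpace ℝ (Fin n) →ₗ[ℝ] ℝ)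
    rw [finrank_euclideanSpace_fin] at hY
    exact hA.le_of_inner_map_self_le_on_hyperplane hB hlam_mono hθ_mono hlam hθ _ hY
      (fun z hz => inner_toEuclideanLin_adjMat_deleteEdges_le_s10 G hz) (by omega) (by omega)

/-- Let `G` be a simple graph on `n` vertices, `e ∈ E(G)`, `H = G - e`,
with `lam` and `θ` the nonincreasing lists of eigenvalues of `A(G)` and `A(H)` (0-indexed).
Suppose `H` has exactly `r ≥ 2` positive eigenvalues. Then for every `2 ≤ t ≤ r`,
`λ₁ + Σ_{k=2}^t max{λ_k, 0} ≥ θ₁ + Σ_{k=3}^t θ_k`. -/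
theorem majorization_sum_positive_part {n : ℕ}
    (G H : SimpleGraph (Fin n)) (e : Sym2 (Fin n)) (he : e ∈ G.edgeSet)
    (hH : H = G.deleteEdges {e})
    (lam θ : ℕ → ℝ) (hlam_mono : Antitone lam) (hθ_mono : Antitone θ)
    (hlam : (adjMat G).charpoly.roots = (Multiset.range n).map lam)
    (hθ : (adjMat H).charpoly.roots = (Multiset.range n).map θ)
    (r : ℕ) (hr : 2 ≤ r)
    (hrcard : ((Finset.range n).filter (fun i => 0 < θ i)).card = r) :
    ∀ t : ℕ, 2 ≤ t → t ≤ r →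
      lam 0 + ∑ k ∈ Finset.Ico 1 t, max (lam k) 0 ≥ θ 0 + ∑ k ∈ Finset.Ico 2 t, θ k :=
  majorization_sum_positive_part_general G H e hH lam θ hlam_mono hθ_mono hlam hθ r hrcard
end
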